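/- arXiv:1112.5000 — 7 statements merged into one kernel-verified Lean document; each statement's English description precedes it below -/
import Mathlib

section
/- The Must extractor is anti-monotonic with respect to inclusion: for all points-to relations a1, a2 ⊆ P × V with a1 ⊇ a2 and every v ∈ V, (Must(a1)){v} ⊆ (Must(a2)){v}. -/
/-- Relation application: `R X = {v | ∃ u ∈ X, (u,v) ∈ R}`. -/
def app {V : Type*} (R : Set (V × V)) (X : Set V) : Set V :=
  {v | ∃ u ∈ X, (u, v) ∈ R}

/-- Relation restriction: `R|X = {(u,v) ∈ R | u ∈ X}`. -/
def restrict {V : Type*} (R : Set (V × V)) (X : Set V) : Set (V × V) :=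
  {p ∈ R | p.1 ∈ X}

/-- The `Must` extractor: `Must(R) = ⋃_{x ∈ P} {x} × M_x(R)` where
`M_x(R) = V` if `R|{x} = ∅` or `R|{x} = {(x,?)}`;
`M_x(R) = {y}` if `R|{x} = {(x,y)}` with `y ≠ ?`; and `M_x(R) = ∅` otherwise. -/
def Must {V : Type*} (P : Set V) (undef : V) (R : Set (V × V)) : Set (V × V) :=
  {p | p.1 ∈ P ∧
    ((restrict R {p.1} = ∅ ∨ restrict R {p.1} = {(p.1, undef)}) ∨
     (restrict R {p.1} = {(p.1, p.2)} ∧ p.2 ≠ undef))}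

/-- The `Must` extractor is anti-monotonic with respect to inclusion:
for all points-to relations `a1, a2 ⊆ P × V` with `a1 ⊇ a2` and every `v ∈ V`,
`(Must(a1)){v} ⊆ (Must(a2)){v}`. -/
theorem must_antimonotone {V : Type*} (P : Set V) (undef : V) (hundef : undef ∉ P)
    (a1 a2 : Set (V × V))
    (ha1 : ∀ p ∈ a1, p.1 ∈ P) (ha2 : ∀ p ∈ a2, p.1 ∈ P)
    (h : a2 ⊆ a1) (v : V) :
    app (Must P undef a1) {v} ⊆ app (Must P undef a2) {v} := by
  intro w hw
  obtain ⟨u, hu, hm⟩ := hw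
  rcases hu with rfl
  obtain ⟨hP, hc⟩ := hm
  refine ⟨u, rfl, hP, ?_⟩
  have hsub : restrict a2 {u} ⊆ restrict a1 {u} := fun p hp => ⟨h hp.1, hp.2⟩
  rcases hc with (h0 | h1) | ⟨h1, hne⟩
  · left; left
    rw [h0] at hsub
    exact Set.subset_empty_iff.mp hsub
  · left
    rw [h1] at hsub
    rcases Set.subset_singleton_iff_eq.mp hsub with h' | h'
    · exact Or.inl h'
    · exact Or.inr h'
  · rw [h1] at hsub
    rcases Set.subset_singleton_iff_eq.mp hsub with h' | h'
    · exact Or.inl (Or.inl h')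
    · exact Or.inr ⟨h', hne⟩
end

section
/- Liveness kill-removal is monotonic for the indirect assignment *x = y: for all liveness sets l1, l2 ⊆ P with l1 ⊇ l2 and points-to relations a1, a2 ⊆ P × V with a1 ⊇ a2, one has l1 \ Kill(a1) ⊇ l2 \ Kill(a2). -/
/-- Kill extractor for the indirect assignment `*x = y`: `Kill(a) = (Must(a){x}) ∩ P`. -/
def Kill {V : Type*} (P : Set V) (undef : V) (x : V) (a : Set (V × V)) : Set V :=
  app (Must P undef a) {x} ∩ P

/-- Liveness kill-removal is monotonic for the indirect assignment `*x = y`: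
for all liveness sets `l1, l2 ⊆ P` with `l1 ⊇ l2` and points-to relations
`a1, a2 ⊆ P × V` with `a1 ⊇ a2`, one has `l1 \ Kill(a1) ⊇ l2 \ Kill(a2)`. -/
theorem liveness_kill_removal_monotone {V : Type*}
    (P : Set V) (undef : V) (hundef : undef ∉ P)
    (x y : V) (hx : x ∈ P) (hy : y ∈ P)
    (l1 l2 : Set V) (hl1 : l1 ⊆ P) (hl2 : l2 ⊆ P) (hl : l2 ⊆ l1)
    (a1 a2 : Set (V × V))
    (ha1 : ∀ p ∈ a1, p.1 ∈ P) (ha2 : ∀ p ∈ a2, p.1 ∈ P)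
    (ha : a2 ⊆ a1) :
    l2 \ Kill P undef x a2 ⊆ l1 \ Kill P undef x a1 := by
  intro v hv
  obtain ⟨hvl2, hvk⟩ := hv
  refine ⟨hl hvl2, fun hk => hvk ?_⟩
  obtain ⟨⟨u, hu, hxP, hcase⟩, hvP⟩ := hk
  rcases hu with rfl
  have hsub : restrict a2 {u} ⊆ restrict a1 {u} := fun p hp => ⟨ha hp.1, hp.2⟩
  refine ⟨⟨u, rfl, hxP, ?_⟩, hvP⟩
  rcases hcase with (h | h) | ⟨h, hne⟩
  · left; left
    rw [h] at hsub
    exact Set.subset_empty_iff.mp hsub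
  · rw [h] at hsub
    rcases Set.subset_singleton_iff_eq.mp hsub with h2 | h2
    · left; left; exact h2
    · left; right; exact h2
  · rw [h] at hsub
    rcases Set.subset_singleton_iff_eq.mp hsub with h2 | h2
    · left; left; exact h2
    · right; exact ⟨h2, hne⟩
end

section
/- Points-to kill-removal is monotonic for the indirect assignment *x = y: for all points-to relations a1, a2 ⊆ P × V with a1 ⊇ a2, one has a1 \ (Kill(a1) × V) ⊇ a2 \ (Kill(a2) × V). -/
lemma restrict_mono {V : Type*} {R S : Set (V × V)} (h : R ⊆ S) (X : Set V) :
    restrict R X ⊆ restrict S X := fun p hp => ⟨h hp.1, hp.2⟩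

/-- `Kill` is antitone. -/
lemma Kill_antitone {V : Type*} (P : Set V) (undef : V) (x : V)
    {a1 a2 : Set (V × V)} (ha : a2 ⊆ a1) :
    Kill P undef x a1 ⊆ Kill P undef x a2 := by
  rintro v ⟨⟨u, hu, hP, hcase⟩, hvP⟩
  rcases hu with rfl
  refine ⟨⟨u, rfl, hP, ?_⟩, hvP⟩
  have hsub := restrict_mono ha ({u} : Set V)
  rcases hcase with (h | h) | ⟨h, hne⟩
  · left; left
    rw [h] at hsub
    exact Set.subset_empty_iff.mp hsub
  · rw [h] at hsub
    rcases Set.subset_singleton_iff_eq.mp hsub with h' | h'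
    · exact Or.inl (Or.inl h')
    · exact Or.inl (Or.inr h')
  · rw [h] at hsub
    rcases Set.subset_singleton_iff_eq.mp hsub with h' | h'
    · exact Or.inl (Or.inl h')
    · exact Or.inr ⟨h', hne⟩

/-- Points-to kill-removal is monotonic for the indirect assignment
`*x = y`: for all points-to relations `a1, a2 ⊆ P × V` with `a1 ⊇ a2`, one has
`a1 \ (Kill(a1) × V) ⊇ a2 \ (Kill(a2) × V)`. -/
theorem points_to_kill_removal_monotone {V : Type*}
    (P : Set V) (undef : V) (hundef : undef ∉ P)
    (x y : V) (hx : x ∈ P) (hy : y ∈ P)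
    (a1 a2 : Set (V × V))
    (ha1 : ∀ p ∈ a1, p.1 ∈ P) (ha2 : ∀ p ∈ a2, p.1 ∈ P)
    (ha : a2 ⊆ a1) :
    a2 \ (Kill P undef x a2 ×ˢ (Set.univ : Set V)) ⊆
      a1 \ (Kill P undef x a1 ×ˢ (Set.univ : Set V)) := by
  rintro p ⟨hp, hnot⟩
  refine ⟨ha hp, fun hmem => hnot ?_⟩
  exact ⟨Kill_antitone P undef x ha hmem.1, hmem.2⟩
end

section
/- The liveness flow function of the indirect assignment *x = y is monotonic with respect to the analysis order (reverse inclusion on both components): defining f_L(l, a) = (l \ Kill(a)) ∪ Ref(l, a), for all liveness sets l1, l2 ⊆ P with l1 ⊇ l2 and points-to relations a1, a2 ⊆ P × V with a1 ⊇ a2, one has f_L(l1, a1) ⊇ f_L(l2, a2). -/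
/-- Def extractor for the indirect assignment `*x = y`: `Def(a) = (a{x}) ∩ P`. -/
def Def {V : Type*} (P : Set V) (x : V) (a : Set (V × V)) : Set V :=
  app a {x} ∩ P

open Classical in
/-- Ref extractor for the indirect assignment `*x = y`:
`Ref(l,a) = {x, y}` if `Def(a) ∩ l ≠ ∅`, and `Ref(l,a) = {x}` otherwise. -/
noncomputable def Ref {V : Type*} (P : Set V) (x y : V)
    (l : Set V) (a : Set (V × V)) : Set V :=
  if Def P x a ∩ l ≠ ∅ then {x, y} else {x}

/-- Liveness flow function of the indirect assignment `*x = y`: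
`f_L(l, a) = (l \ Kill(a)) ∪ Ref(l, a)`. -/
noncomputable def fL {V : Type*} (P : Set V) (undef : V) (x y : V)
    (l : Set V) (a : Set (V × V)) : Set V :=
  (l \ Kill P undef x a) ∪ Ref P x y l a

/-- The liveness flow function of the indirect assignment `*x = y` is
monotonic with respect to the analysis order (reverse inclusion on both components):
for all liveness sets `l1, l2 ⊆ P` with `l1 ⊇ l2` and points-to relations
`a1, a2 ⊆ P × V` with `a1 ⊇ a2`, one has `f_L(l1, a1) ⊇ f_L(l2, a2)`. -/
theorem fL_monotone {V : Type*}
    (P : Set V) (undef : V) (hundef : undef ∉ P)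
    (x y : V) (hx : x ∈ P) (hy : y ∈ P)
    (l1 l2 : Set V) (hl1 : l1 ⊆ P) (hl2 : l2 ⊆ P) (hl : l2 ⊆ l1)
    (a1 a2 : Set (V × V))
    (ha1 : ∀ p ∈ a1, p.1 ∈ P) (ha2 : ∀ p ∈ a2, p.1 ∈ P)
    (ha : a2 ⊆ a1) :
    fL P undef x y l2 a2 ⊆ fL P undef x y l1 a1 := by
  classical
  have hres : restrict a2 {x} ⊆ restrict a1 {x} := fun p hp => ⟨ha hp.1, hp.2⟩
  -- Kill is antitone
  have hkill : Kill P undef x a1 ⊆ Kill P undef x a2 := by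
    rintro v ⟨⟨u, hu, hP', hcase⟩, hvP⟩
    simp only [Set.mem_singleton_iff] at hu
    subst hu
    refine ⟨⟨u, rfl, hP', ?_⟩, hvP⟩
    rcases hcase with h | ⟨h, hne⟩
    · have hsub : restrict a2 {u} ⊆ {(u, undef)} := by
        rcases h with h | h
        · intro p hp; exact absurd (hres hp) (by simp [h])
        · exact h ▸ hres
      rcases Set.subset_singleton_iff_eq.mp hsub with h2 | h2
      · exact Or.inl (Or.inl h2)
      · exact Or.inl (Or.inr h2)
    · have hsub : restrict a2 {u} ⊆ {(u, v)} := h ▸ hres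
      rcases Set.subset_singleton_iff_eq.mp hsub with h2 | h2
      · exact Or.inl (Or.inl h2)
      · exact Or.inr ⟨h2, hne⟩
  -- Ref is monotone
  have href : Ref P x y l2 a2 ⊆ Ref P x y l1 a1 := by
    unfold Ref
    split_ifs with h2 h1 h1
    · exact subset_rfl
    · exfalso
      apply h1
      obtain ⟨v, ⟨⟨u, hu, hva⟩, hvP⟩, hvl⟩ := Set.nonempty_iff_ne_empty.mpr h2
      exact Set.nonempty_iff_ne_empty.mp ⟨v, ⟨⟨u, hu, ha hva⟩, hvP⟩, hl hvl⟩
    · exact fun v hv => by simp_all [Set.mem_insert_iff]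
    · exact subset_rfl
  intro v hv
  rcases hv with ⟨hvl, hvk⟩ | hvr
  · exact Or.inl ⟨hl hvl, fun hk => hvk (hkill hk)⟩
  · exact Or.inr (href hvr)
end

section
/- The may-points-to flow function of the indirect assignment *x = y is monotonic with respect to the analysis order (reverse inclusion on both components): defining f_A(l, a) = ((a \ (Kill(a) × V)) ∪ (Def(a) × Pointee(a)))|l, for all liveness sets l1, l2 ⊆ P with l1 ⊇ l2 and points-to relations a1, a2 ⊆ P × V with a1 ⊇ a2, one has f_A(l1, a1) ⊇ f_A(l2, a2). -/
/-- Pointee extractor for the indirect assignment `*x = y`: `Pointee(a) = a{y}`. -/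
def Pointee {V : Type*} (y : V) (a : Set (V × V)) : Set V :=
  app a {y}

/-- May-points-to flow function of the indirect assignment `*x = y`:
`f_A(l, a) = ((a \ (Kill(a) × V)) ∪ (Def(a) × Pointee(a)))|l`. -/
def fA {V : Type*} (P : Set V) (undef : V) (x y : V)
    (l : Set V) (a : Set (V × V)) : Set (V × V) :=
  restrict ((a \ (Kill P undef x a ×ˢ (Set.univ : Set V))) ∪
    (Def P x a ×ˢ Pointee y a)) l

/-- The may-points-to flow function of the indirect assignment `*x = y`
is monotonic with respect to the analysis order (reverse inclusion on both components):
for all liveness sets `l1, l2 ⊆ P` with `l1 ⊇ l2` and points-to relations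
`a1, a2 ⊆ P × V` with `a1 ⊇ a2`, one has `f_A(l1, a1) ⊇ f_A(l2, a2)`. -/
theorem fA_monotone {V : Type*}
    (P : Set V) (undef : V) (hundef : undef ∉ P)
    (x y : V) (hx : x ∈ P) (hy : y ∈ P)
    (l1 l2 : Set V) (hl1 : l1 ⊆ P) (hl2 : l2 ⊆ P) (hl : l2 ⊆ l1)
    (a1 a2 : Set (V × V))
    (ha1 : ∀ p ∈ a1, p.1 ∈ P) (ha2 : ∀ p ∈ a2, p.1 ∈ P)
    (ha : a2 ⊆ a1) :
    fA P undef x y l2 a2 ⊆ fA P undef x y l1 a1 := by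
  intro p hp
  obtain ⟨hpmem, hpl⟩ := hp
  refine ⟨?_, hl hpl⟩
  have hres : restrict a2 {x} ⊆ restrict a1 {x} := fun q hq => ⟨ha hq.1, hq.2⟩
  rcases hpmem with ⟨hpa2, hpk⟩ | ⟨hd, hpt⟩
  · left
    refine ⟨ha hpa2, ?_⟩
    rintro ⟨⟨⟨u, hu, hmust⟩, hp1P⟩, -⟩
    simp only [Set.mem_singleton_iff] at hu; subst hu
    apply hpk
    refine ⟨⟨⟨u, rfl, hx, ?_⟩, hp1P⟩, trivial⟩
    -- show (x, p.1) ∈ Must of a2, using info about a1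
    rcases hmust.2 with (h1 | h1) | ⟨h1, hne⟩
    · -- restrict a1 {x} = ∅ so restrict a2 {x} = ∅
      left; left
      exact Set.subset_eq_empty (h1 ▸ hres) rfl
    · -- restrict a1 {x} = {(x, undef)}
      rcases Set.subset_singleton_iff_eq.mp (h1 ▸ hres) with h2 | h2
      · left; left; exact h2
      · left; right; exact h2
    · -- restrict a1 {x} = {(x, p.1)}
      rcases Set.subset_singleton_iff_eq.mp (h1 ▸ hres) with h2 | h2
      · left; left; exact h2
      · right; exact ⟨h2, hne⟩
  · right
    obtain ⟨hd1, hd2⟩ := hd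
    obtain ⟨u, hu, hua⟩ := hd1
    obtain ⟨w, hw, hwa⟩ := hpt
    exact ⟨⟨⟨u, hu, ha hua⟩, hd2⟩, ⟨w, hw, ha hwa⟩⟩
end

section
/- For the indirect assignment *x = y, if the kill set is neither empty nor all of P then it equals the def set: for every points-to relation A ⊆ P × V and x ∈ P, letting Kill = (Must(A){x}) ∩ P and Def = (A{x}) ∩ P, if Kill ≠ ∅ and Kill ≠ P then Kill = Def. -/
/-- For the indirect assignment `*x = y`, if the kill set is neither
empty nor all of `P` then it equals the def set: for every points-to relation
`A ⊆ P × V` and `x ∈ P`, letting `Kill = (Must(A){x}) ∩ P` and `Def = (A{x}) ∩ P`,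
if `Kill ≠ ∅` and `Kill ≠ P` then `Kill = Def`. -/
theorem kill_eq_def {V : Type*}
    (P : Set V) (undef : V) (hundef : undef ∉ P)
    (A : Set (V × V)) (hA : ∀ p ∈ A, p.1 ∈ P)
    (x : V) (hx : x ∈ P)
    (h1 : app (Must P undef A) {x} ∩ P ≠ ∅)
    (h2 : app (Must P undef A) {x} ∩ P ≠ P) :
    app (Must P undef A) {x} ∩ P = app A {x} ∩ P := by
  have hmem : ∀ v, v ∈ app (Must P undef A) {x} ↔
      ((restrict A {x} = ∅ ∨ restrict A {x} = {(x, undef)}) ∨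
       (restrict A {x} = {(x, v)} ∧ v ≠ undef)) := by
    intro v
    constructor
    · rintro ⟨u, hu, hM⟩
      have hu' : u = x := hu
      subst hu'
      exact hM.2
    · intro h
      exact ⟨x, rfl, hx, h⟩
  have hres : ∀ a b, (a, b) ∈ restrict A {x} ↔ (a, b) ∈ A ∧ a = x := by
    intro a b; exact Iff.rfl
  by_cases hE : restrict A {x} = ∅ ∨ restrict A {x} = {(x, undef)}
  · exfalso
    apply h2
    ext v
    simp only [Set.mem_inter_iff, hmem]
    tauto
  push_neg at hE
  obtain ⟨hne, hnu⟩ := hE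
  have hne' : restrict A {x} ≠ ∅ := Set.nonempty_iff_ne_empty.mp hne
  have hnonempty : (restrict A {x}).Nonempty := hne
  obtain ⟨⟨a, b⟩, hp⟩ := hnonempty
  have hp1 : a = x := ((hres a b).mp hp).2
  subst hp1
  have hy : ∃ y, (a, y) ∈ restrict A {a} ∧ y ≠ undef := by
    by_contra hc
    push_neg at hc
    apply hnu
    ext ⟨c, d⟩
    constructor
    · intro hq
      have hc1 : c = a := ((hres c d).mp hq).2
      subst hc1
      have := hc d hq
      simp [Prod.ext_iff, this]
    · intro hq
      have hq' : (c, d) = (a, undef) := hq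
      rw [hq']
      have := hc b hp
      rw [← this]
      exact hp
  obtain ⟨y, hyA, hyu⟩ := hy
  by_cases hsing : restrict A {a} = {(a, y)}
  · ext v
    simp only [Set.mem_inter_iff]
    constructor
    · rintro ⟨hv, hvP⟩
      rcases (hmem v).mp hv with h | ⟨h, hvu⟩
      · exact absurd h (by push_neg; exact ⟨hne, hnu⟩)
      · have h2 : (a, y) ∈ ({(a, v)} : Set (V × V)) := by rw [← h]; exact hyA
        have : y = v := by simpa [Prod.ext_iff] using h2
        subst this
        exact ⟨⟨a, rfl, ((hres a y).mp hyA).1⟩, hvP⟩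
    · rintro ⟨⟨u, hu, huv⟩, hvP⟩
      have hu' : u = a := hu
      subst hu'
      have hv : (u, v) ∈ restrict A {u} := ⟨huv, rfl⟩
      rw [hsing] at hv
      have : v = y := by simpa [Prod.ext_iff] using hv
      subst this
      exact ⟨(hmem v).mpr (Or.inr ⟨hsing, hyu⟩), hvP⟩
  · exfalso
    have hz : ∃ z, (a, z) ∈ restrict A {a} ∧ z ≠ y := by
      by_contra hc
      push_neg at hc
      apply hsing
      ext ⟨c, d⟩
      constructor
      · intro hq
        have hc1 : c = a := ((hres c d).mp hq).2
        subst hc1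
        have := hc d hq
        simp [Prod.ext_iff, this]
      · intro hq
        have hq' : (c, d) = (a, y) := hq
        rw [hq']
        exact hyA
    obtain ⟨z, hzA, hzy⟩ := hz
    apply h1
    ext v
    simp only [Set.mem_inter_iff, Set.mem_empty_iff_false, iff_false]
    rintro ⟨hv, -⟩
    rcases (hmem v).mp hv with h | ⟨h, hvu⟩
    · exact absurd h (by push_neg; exact ⟨hne, hnu⟩)
    · rw [h] at hyA hzA
      have hy' : y = v := by simpa [Prod.ext_iff] using hyA
      have hz' : z = v := by simpa [Prod.ext_iff] using hzA
      exact hzy (hz'.trans hy'.symm)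
end

section
/- Sparseness of lazy pointer analysis: assume the data flow equations (E2) and (E3) hold. Let x ∈ P, y ∈ V, let ρ be an (x,y)-propagation path (a maximal (x,y)-propagation chain), and let ρ' be an x-liveness path (a maximal x-liveness chain satisfying (L1)) such that ρ occurs as a contiguous subsequence of ρ', i.e., there is an index m with ρ'_{m+i-1} = ρ_i for all 1 ≤ i ≤ k where k is the length of ρ. Then ρ is a suffix of ρ', i.e., m + k − 1 equals the length of ρ'. -/
/-- An `x`-liveness chain: a nonempty finite sequence of nodes `s 1, …, s k` such that
(L2) `s (i+1) ∈ succ (s i)` for `1 ≤ i < k`,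
(L3) `x ∉ Kill (s i)` and `x ∈ Lin (s i)` for `1 < i ≤ k`, and
(L4) `x ∈ Lout (s i)` for `1 ≤ i < k`. -/
def LivenessChain {V N : Type*} (succ : N → Set N)
    (Kill Lin Lout : N → Set V)
    (x : V) (k : ℕ) (s : ℕ → N) : Prop :=
  1 ≤ k ∧
  (∀ i, 1 ≤ i → i < k → s (i + 1) ∈ succ (s i)) ∧
  (∀ i, 1 < i → i ≤ k → x ∉ Kill (s i) ∧ x ∈ Lin (s i)) ∧
  (∀ i, 1 ≤ i → i < k → x ∈ Lout (s i))

/-- An `(x,y)`-propagation chain: a nonempty finite sequence of nodes `s 1, …, s k`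
such that (A1) `(x,y) ∈ Gen (s 1)`,
(A2) `s (i+1) ∈ succ (s i)` for `1 ≤ i < k`,
(A3) `(x,y) ∈ Ain (s i)`, `x ∉ Kill (s i)` and `x ∈ Lin (s i)` for `1 < i ≤ k`, and
(A4) `(x,y) ∈ Aout (s i)` and `x ∈ Lout (s i)` for `1 ≤ i < k`. -/
def PropChain {V N : Type*} (succ : N → Set N)
    (Kill Lin Lout : N → Set V)
    (Ain Aout Gen : N → Set (V × V))
    (x y : V) (k : ℕ) (s : ℕ → N) : Prop :=
  1 ≤ k ∧
  (x, y) ∈ Gen (s 1) ∧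
  (∀ i, 1 ≤ i → i < k → s (i + 1) ∈ succ (s i)) ∧
  (∀ i, 1 < i → i ≤ k → (x, y) ∈ Ain (s i) ∧ x ∉ Kill (s i) ∧ x ∈ Lin (s i)) ∧
  (∀ i, 1 ≤ i → i < k → (x, y) ∈ Aout (s i) ∧ x ∈ Lout (s i))

/-- Append a node `t` at the end of a sequence of length `k` (the new node sits at
index `k + 1`; earlier indices are unchanged). -/
def extendEnd {N : Type*} (s : ℕ → N) (k : ℕ) (t : N) : ℕ → N :=
  fun i => if i = k + 1 then t else s i

/-- Prepend a node `t` at the front of a sequence (the new node sits at index `1`;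
the original node at index `i` moves to index `i + 1`). -/
def extendFront {N : Type*} (s : ℕ → N) (t : N) : ℕ → N :=
  fun i => if i ≤ 1 then t else s (i - 1)

/-- An `x`-liveness path: an `x`-liveness chain that additionally satisfies
(L1) `x ∈ Ref (s k)` and is maximal: no sequence obtained from it by appending one
node at the end or prepending one node at the front satisfies (L1)–(L4). -/
def LivenessPath {V N : Type*} (succ : N → Set N)
    (Ref Kill Lin Lout : N → Set V)
    (x : V) (k : ℕ) (s : ℕ → N) : Prop :=
  LivenessChain succ Kill Lin Lout x k s ∧
  x ∈ Ref (s k) ∧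
  (∀ t : N, ¬ (LivenessChain succ Kill Lin Lout x (k + 1) (extendEnd s k t) ∧
      x ∈ Ref (extendEnd s k t (k + 1)))) ∧
  (∀ t : N, ¬ (LivenessChain succ Kill Lin Lout x (k + 1) (extendFront s t) ∧
      x ∈ Ref (extendFront s t (k + 1))))

/-- An `(x,y)`-propagation path: an `(x,y)`-propagation chain that is maximal:
no sequence obtained from it by appending one node at the end or prepending one node
at the front satisfies (A1)–(A4). -/
def PropPath {V N : Type*} (succ : N → Set N)
    (Kill Lin Lout : N → Set V)
    (Ain Aout Gen : N → Set (V × V))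
    (x y : V) (k : ℕ) (s : ℕ → N) : Prop :=
  PropChain succ Kill Lin Lout Ain Aout Gen x y k s ∧
  (∀ t : N, ¬ PropChain succ Kill Lin Lout Ain Aout Gen x y (k + 1) (extendEnd s k t)) ∧
  (∀ t : N, ¬ PropChain succ Kill Lin Lout Ain Aout Gen x y (k + 1) (extendFront s t))

/-- Sparseness of lazy pointer analysis: assume the data flow equations
(E2) and (E3) hold. Let `x ∈ P`, `y ∈ V`, let `ρ` (of length `k`, sequence `s`) be an
`(x,y)`-propagation path and `ρ'` (of length `k'`, sequence `s'`) be an `x`-liveness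
path such that `ρ` occurs as a contiguous subsequence of `ρ'` starting at index `m`.
Then `ρ` is a suffix of `ρ'`, i.e., `m + k - 1 = k'`. -/
theorem sparseness {V N : Type*}
    (P : Set V) (undef : V) (hundef : undef ∉ P)
    (succ : N → Set N)
    (Lin Lout Ref Kill : N → Set V)
    (Ain Aout Gen : N → Set (V × V))
    (hE2 : ∀ n, Aout n =
      {p : V × V | p.1 ∈ Lout n ∧ ((p ∈ Ain n ∧ p.1 ∉ Kill n) ∨ p ∈ Gen n)})
    (hE3 : ∀ p n, n ∈ succ p → {r ∈ Aout p | r.1 ∈ Lin n} ⊆ Ain n)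
    (x : V) (hx : x ∈ P) (y : V)
    (k : ℕ) (s : ℕ → N)
    (hρ : PropPath succ Kill Lin Lout Ain Aout Gen x y k s)
    (k' : ℕ) (s' : ℕ → N)
    (hρ' : LivenessPath succ Ref Kill Lin Lout x k' s')
    (m : ℕ) (hm : 1 ≤ m) (hmk : m + k - 1 ≤ k')
    (hsub : ∀ i, 1 ≤ i → i ≤ k → s' (m + i - 1) = s i) :
    m + k - 1 = k' := by
  by_contra hne
  have hlt : m + k - 1 < k' := lt_of_le_of_ne hmk hne
  obtain ⟨hc, hmaxE, _⟩ := hρ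
  obtain ⟨hk1, hGen, hsucc, hA3, hA4⟩ := hc
  obtain ⟨hl, _, _, _⟩ := hρ'
  obtain ⟨hk'1, hsucc', hL3, hL4⟩ := hl
  have hsk : s' (m + k - 1) = s k := hsub k hk1 le_rfl
  set t := s' (m + k) with ht
  -- arithmetic facts
  have h1 : 1 ≤ m + k - 1 := by omega
  have h2 : m + k - 1 + 1 = m + k := by omega
  have hsuc_t : t ∈ succ (s k) := by
    have := hsucc' (m + k - 1) h1 hlt
    rw [h2, hsk] at this; exact this
  have hL3t : x ∉ Kill t ∧ x ∈ Lin t := by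
    have := hL3 (m + k) (by omega) (by omega)
    exact this
  have hLoutk : x ∈ Lout (s k) := by
    have := hL4 (m + k - 1) h1 hlt
    rwa [hsk] at this
  have hAoutk : (x, y) ∈ Aout (s k) := by
    rw [hE2 (s k)]
    refine ⟨hLoutk, ?_⟩
    rcases eq_or_lt_of_le hk1 with h | h
    · right
      have : s 1 = s k := by rw [← h]
      rw [← this]; exact hGen
    · left
      have := hA3 k h le_rfl
      exact ⟨this.1, this.2.1⟩
  have hAint : (x, y) ∈ Ain t :=
    hE3 (s k) t hsuc_t ⟨hAoutk, hL3t.2⟩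
  apply hmaxE t
  have hee : ∀ j, j ≤ k → extendEnd s k t j = s j := by
    intro j hj
    simp [extendEnd]; intro hje; omega
  have het : extendEnd s k t (k + 1) = t := by simp [extendEnd]
  refine ⟨by omega, ?_, ?_, ?_, ?_⟩
  · rw [hee 1 hk1]; exact hGen
  · intro i hi1 hik
    rcases eq_or_lt_of_le (Nat.lt_succ_iff.mp hik) with h | h
    · subst h
      rw [hee i le_rfl, het]; exact hsuc_t
    · rw [hee i (by omega), hee (i + 1) (by omega)]
      exact hsucc i hi1 h
  · intro i hi1 hik
    rcases eq_or_lt_of_le hik with h | h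
    · subst h; rw [het]; exact ⟨hAint, hL3t.1, hL3t.2⟩
    · rw [hee i (by omega)]
      exact hA3 i hi1 (by omega)
  · intro i hi1 hik
    rcases eq_or_lt_of_le (Nat.lt_succ_iff.mp hik) with h | h
    · subst h; rw [hee i le_rfl]
      exact ⟨hAoutk, hLoutk⟩
    · rw [hee i (by omega)]
      exact hA4 i hi1 h
end
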